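/- Let (H,α) be a Hom-bialgebra and σ: H⊗H → k normalized (σ(1,h) = σ(h,1) = ε(h)) and convolution invertible with σ∘(α⊗α) = σ. Then σ is a left Hom-2-cocycle if and only if its convolution inverse σ⁻¹ is a right Hom-2-cocycle, i.e. σ⁻¹(α²(h), l₁k₁)σ⁻¹(l₂,k₂) = σ⁻¹(h₁l₁, α²(k))σ⁻¹(h₂,l₂). -/

import Mathlib

open scoped TensorProduct BigOperators

universe u v

/-- A Hom-Hopf algebra over a field `k`, with a chosen Sweedler-type
decomposition (`Idx`, `T`, `d1`, `d2`) of the comultiplication: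
`comul h = ∑ i in T h, d1 h i ⊗ₜ d2 h i`.  The structure map `α` is assumed
bijective (a linear equivalence), as throughout the paper. -/
structure HomHopf (k : Type u) (H : Type v) [Field k] [AddCommGroup H] [Module k H] where
  mul : H →ₗ[k] H →ₗ[k] H
  one : H
  α : H ≃ₗ[k] H
  comul : H →ₗ[k] H ⊗[k] H
  counit : H →ₗ[k] k
  S : H →ₗ[k] H
  Idx : Type v
  T : H → Finset Idx
  d1 : H → Idx → H
  d2 : H → Idx → H
  repr : ∀ h, comul h = ∑ i ∈ T h, d1 h i ⊗ₜ[k] d2 h i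
  α_one : α one = one
  α_mul : ∀ x y, α (mul x y) = mul (α x) (α y)
  one_mul : ∀ x, mul one x = α x
  mul_one : ∀ x, mul x one = α x
  hom_assoc : ∀ x y z, mul (α x) (mul y z) = mul (mul x y) (α z)
  counit_α : ∀ h, counit (α h) = counit h
  comul_α : ∀ h, comul (α h) = ∑ i ∈ T h, α (d1 h i) ⊗ₜ[k] α (d2 h i)
  counit_left : ∀ h, ∑ i ∈ T h, counit (d1 h i) • d2 h i = α h
  counit_right : ∀ h, ∑ i ∈ T h, counit (d2 h i) • d1 h i = α h
  hom_coassoc : ∀ h,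
    (TensorProduct.assoc k H H H) (∑ i ∈ T h, comul (d1 h i) ⊗ₜ[k] α (d2 h i))
      = ∑ i ∈ T h, α (d1 h i) ⊗ₜ[k] comul (d2 h i)
  counit_one : counit one = 1
  counit_mul : ∀ x y, counit (mul x y) = counit x * counit y
  comul_one : comul one = one ⊗ₜ[k] one
  comul_mul : ∀ x y, comul (mul x y)
      = ∑ i ∈ T x, ∑ j ∈ T y, mul (d1 x i) (d1 y j) ⊗ₜ[k] mul (d2 x i) (d2 y j)
  S_α : ∀ h, S (α h) = α (S h)
  S_left : ∀ h, ∑ i ∈ T h, mul (S (d1 h i)) (d2 h i) = counit h • one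
  S_right : ∀ h, ∑ i ∈ T h, mul (d1 h i) (S (d2 h i)) = counit h • one

/-- A unital Hom-associative algebra with bijective structure map. -/
structure HomAlg (k : Type u) (A : Type v) [Field k] [AddCommGroup A] [Module k A] where
  mul : A →ₗ[k] A →ₗ[k] A
  one : A
  β : A ≃ₗ[k] A
  β_one : β one = one
  β_mul : ∀ x y, β (mul x y) = mul (β x) (β y)
  one_mul : ∀ x, mul one x = β x
  mul_one : ∀ x, mul x one = β x
  hom_assoc : ∀ x y z, mul (β x) (mul y z) = mul (mul x y) (β z)

section Lazy

variable {k : Type u} {H : Type v} [Field k] [AddCommGroup H] [Module k H]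

/-- `σ ∘ (α ⊗ α) = σ`. -/
def AlphaInvariant2 (HH : HomHopf k H) (σ : H → H → k) : Prop :=
  ∀ h g, σ (HH.α h) (HH.α g) = σ h g

/-- The left Hom-2-cocycle equation
`σ(l₁,k₁)σ(α²(h), l₂k₂) = σ(h₁,l₁)σ(h₂l₂, α²(k))`. -/
def LeftCocycleEq (HH : HomHopf k H) (σ : H → H → k) : Prop :=
  ∀ h l m, ∑ j ∈ HH.T l, ∑ n ∈ HH.T m,
      σ (HH.d1 l j) (HH.d1 m n) * σ (HH.α (HH.α h)) (HH.mul (HH.d2 l j) (HH.d2 m n))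
    = ∑ i ∈ HH.T h, ∑ j ∈ HH.T l,
      σ (HH.d1 h i) (HH.d1 l j) * σ (HH.mul (HH.d2 h i) (HH.d2 l j)) (HH.α (HH.α m))

/-- The right Hom-2-cocycle equation
`σ(α²(h), l₁k₁)σ(l₂,k₂) = σ(h₁l₁, α²(k))σ(h₂,l₂)`. -/
def RightCocycleEq (HH : HomHopf k H) (σ : H → H → k) : Prop :=
  ∀ h l m, ∑ j ∈ HH.T l, ∑ n ∈ HH.T m,
      σ (HH.α (HH.α h)) (HH.mul (HH.d1 l j) (HH.d1 m n)) * σ (HH.d2 l j) (HH.d2 m n)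
    = ∑ i ∈ HH.T h, ∑ j ∈ HH.T l,
      σ (HH.mul (HH.d1 h i) (HH.d1 l j)) (HH.α (HH.α m)) * σ (HH.d2 h i) (HH.d2 l j)

/-- A left Hom-2-cocycle. -/
def IsLeftCocycle (HH : HomHopf k H) (σ : H → H → k) : Prop :=
  AlphaInvariant2 HH σ ∧ LeftCocycleEq HH σ

/-- A right Hom-2-cocycle. -/
def IsRightCocycle (HH : HomHopf k H) (σ : H → H → k) : Prop :=
  AlphaInvariant2 HH σ ∧ RightCocycleEq HH σ

/-- `σ` is normalized: `σ(1,h) = σ(h,1) = ε(h)`. -/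
def Normalized2 (HH : HomHopf k H) (σ : H → H → k) : Prop :=
  (∀ h, σ HH.one h = HH.counit h) ∧ (∀ h, σ h HH.one = HH.counit h)

/-- `τ` is the convolution inverse of `σ : H ⊗ H → k`. -/
def ConvInv2 (HH : HomHopf k H) (σ τ : H → H → k) : Prop :=
  (∀ h g, ∑ i ∈ HH.T h, ∑ j ∈ HH.T g,
      σ (HH.d1 h i) (HH.d1 g j) * τ (HH.d2 h i) (HH.d2 g j) = HH.counit h * HH.counit g) ∧
  (∀ h g, ∑ i ∈ HH.T h, ∑ j ∈ HH.T g,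
      τ (HH.d1 h i) (HH.d1 g j) * σ (HH.d2 h i) (HH.d2 g j) = HH.counit h * HH.counit g)

/-- `σ` is lazy: `σ(h₁,g₁)h₂g₂ = h₁g₁σ(h₂,g₂)`. -/
def IsLazy2 (HH : HomHopf k H) (σ : H → H → k) : Prop :=
  ∀ h g, ∑ i ∈ HH.T h, ∑ j ∈ HH.T g,
      σ (HH.d1 h i) (HH.d1 g j) • HH.mul (HH.d2 h i) (HH.d2 g j)
    = ∑ i ∈ HH.T h, ∑ j ∈ HH.T g,
      σ (HH.d2 h i) (HH.d2 g j) • HH.mul (HH.d1 h i) (HH.d1 g j)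

/-- The convolution product of `σ, τ : H ⊗ H → k`. -/
def conv2 (HH : HomHopf k H) (σ τ : H → H → k) : H → H → k :=
  fun h g => ∑ i ∈ HH.T h, ∑ j ∈ HH.T g,
    σ (HH.d1 h i) (HH.d1 g j) * τ (HH.d2 h i) (HH.d2 g j)

/-- The deformed multiplication `h ·_σ g = σ(h₁,g₁)α⁻¹(h₂g₂)` on `H`. -/
def mulSigma (HH : HomHopf k H) (σ : H → H → k) : H → H → H :=
  fun h g => ∑ i ∈ HH.T h, ∑ j ∈ HH.T g,
    σ (HH.d1 h i) (HH.d1 g j) • HH.α.symm (HH.mul (HH.d2 h i) (HH.d2 g j))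

/-- The convolution product of `γ, δ : H → k`. -/
def conv1 (HH : HomHopf k H) (γ δ : H → k) : H → k :=
  fun h => ∑ i ∈ HH.T h, γ (HH.d1 h i) * δ (HH.d2 h i)

/-- `δ` is the convolution inverse of `γ : H → k`. -/
def ConvInv1 (HH : HomHopf k H) (γ δ : H → k) : Prop :=
  (∀ h, conv1 HH γ δ h = HH.counit h) ∧ (∀ h, conv1 HH δ γ h = HH.counit h)

/-- `γ : H → k` is lazy: `γ(h₁)h₂ = h₁γ(h₂)`. -/
def IsLazy1 (HH : HomHopf k H) (γ : H → k) : Prop :=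
  ∀ h, ∑ i ∈ HH.T h, γ (HH.d1 h i) • HH.d2 h i = ∑ i ∈ HH.T h, γ (HH.d2 h i) • HH.d1 h i

/-- `D¹(γ)(h,g) = γ(h₁)γ(g₁)γ⁻¹(h₂g₂)` (with `δ` the convolution inverse of `γ`). -/
def D1 (HH : HomHopf k H) (γ δ : H → k) : H → H → k :=
  fun h g => ∑ i ∈ HH.T h, ∑ j ∈ HH.T g,
    γ (HH.d1 h i) * γ (HH.d1 g j) * δ (HH.mul (HH.d2 h i) (HH.d2 g j))

end Lazy


/-!
Convolution `f ∗ g = mul' ∘ (f ⊗ g) ∘ Δ` on the dual of a Hom-coalgebra `(C, Δ, ε, α)` is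
Hom-associative, `(f ∘ α) ∗ (g ∗ e) = (f ∗ g) ∗ (e ∘ α)`, with `ε ∗ f = f ∗ ε = f ∘ α`, so the
`α`-invariant functionals form a monoid. On `H ⊗ H ⊗ H` the functionals `U τ = ε ⊗ τ`,
`V τ = τ(α -, - -)`, `P τ = τ ⊗ ε` and `Q τ = τ(- -, α -)` depend multiplicatively on
`τ : H ⊗ H → k`, because `α ⊗ μ` and `μ ⊗ α` are comultiplicative. The left cocycle condition
for `σ` reads `U σ * V σ = P σ * Q σ`, and the right one for `σ⁻¹` reads
`V σ⁻¹ * U σ⁻¹ = Q σ⁻¹ * P σ⁻¹`, which is the first equation inverted.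
-/

open TensorProduct LinearMap

theorem Units.map_mul_map_eq_iff {M N : Type*} [Monoid M] [Monoid N] (f g f' g' : M →* N)
    (u : Mˣ) : f u * g u = f' u * g' u ↔ g ↑u⁻¹ * f ↑u⁻¹ = g' ↑u⁻¹ * f' ↑u⁻¹ := by
  have h := inv_inj (a := Units.map f u * Units.map g u) (b := Units.map f' u * Units.map g' u)
  rw [mul_inv_rev, mul_inv_rev, Units.ext_iff, Units.ext_iff] at h
  simpa only [Units.val_mul, Units.coe_map, Units.coe_map_inv, ← map_units_inv] using h.symm

structure HomCoalgebra (k C : Type*) [CommSemiring k] [AddCommMonoid C] [Module k C] where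
  comul : C →ₗ[k] C ⊗[k] C
  counit : C →ₗ[k] k
  α : C ≃ₗ[k] C
  coassoc : TensorProduct.assoc k C C C ∘ₗ map comul α.toLinearMap ∘ₗ comul
    = map α.toLinearMap comul ∘ₗ comul
  lid_counit_comul :
    (TensorProduct.lid k C).toLinearMap ∘ₗ map counit id ∘ₗ comul = α.toLinearMap
  rid_counit_comul :
    (TensorProduct.rid k C).toLinearMap ∘ₗ map id counit ∘ₗ comul = α.toLinearMap
  comul_comp_α : comul ∘ₗ α.toLinearMap = map α.toLinearMap α.toLinearMap ∘ₗ comul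
  counit_comp_α : counit ∘ₗ α.toLinearMap = counit

namespace HomCoalgebra

variable {k C D E : Type*} [CommSemiring k] [AddCommMonoid C] [Module k C]
  [AddCommMonoid D] [Module k D] [AddCommMonoid E] [Module k E]
  (HC : HomCoalgebra k C) (HD : HomCoalgebra k D) (HE : HomCoalgebra k E)

def conv (f g : C →ₗ[k] k) : C →ₗ[k] k := mul' k k ∘ₗ map f g ∘ₗ HC.comul

theorem conv_assoc (f g e : C →ₗ[k] k) :
    HC.conv (f ∘ₗ HC.α.toLinearMap) (HC.conv g e)
      = HC.conv (HC.conv f g) (e ∘ₗ HC.α.toLinearMap) := by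
  have hmul : (mul' k k ∘ₗ map f (mul' k k ∘ₗ map g e)) ∘ₗ
      (TensorProduct.assoc k C C C).toLinearMap = mul' k k ∘ₗ map (mul' k k ∘ₗ map f g) e := by
    ext; simp [mul_assoc]
  calc HC.conv (f ∘ₗ HC.α.toLinearMap) (HC.conv g e)
      = mul' k k ∘ₗ map f (mul' k k ∘ₗ map g e) ∘ₗ
          map HC.α.toLinearMap HC.comul ∘ₗ HC.comul := by
        ext c; simp only [conv, comp_apply, map_map]; rfl
    _ = mul' k k ∘ₗ map (mul' k k ∘ₗ map f g) e ∘ₗ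
          map HC.comul HC.α.toLinearMap ∘ₗ HC.comul := by
        rw [← HC.coassoc]; simp only [← comp_assoc]; rw [hmul]
    _ = HC.conv (HC.conv f g) (e ∘ₗ HC.α.toLinearMap) := by
        ext c; simp only [conv, comp_apply, map_map]; rfl

def IsComulHom (φ : C →ₗ[k] D) : Prop := HD.comul ∘ₗ φ = map φ φ ∘ₗ HC.comul

variable {HC HD} in
theorem conv_comp {φ : C →ₗ[k] D} (hφ : IsComulHom HC HD φ) (f g : D →ₗ[k] k) :
    HC.conv (f ∘ₗ φ) (g ∘ₗ φ) = HD.conv f g ∘ₗ φ := by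
  rw [conv, conv, comp_assoc, comp_assoc, hφ, ← comp_assoc _ (map φ φ), ← map_comp]

theorem conv_comp_α (f g : C →ₗ[k] k) :
    HC.conv f g ∘ₗ HC.α.toLinearMap
      = HC.conv (f ∘ₗ HC.α.toLinearMap) (g ∘ₗ HC.α.toLinearMap) :=
  (conv_comp HC.comul_comp_α f g).symm

theorem counit_conv (f : C →ₗ[k] k) : HC.conv HC.counit f = f ∘ₗ HC.α.toLinearMap := by
  have h : mul' k k ∘ₗ map HC.counit f
      = (f ∘ₗ (TensorProduct.lid k C).toLinearMap) ∘ₗ map HC.counit id := by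
    ext; simp
  rw [conv, ← HC.lid_counit_comul, ← comp_assoc, h]; rfl

theorem conv_counit (f : C →ₗ[k] k) : HC.conv f HC.counit = f ∘ₗ HC.α.toLinearMap := by
  have h : mul' k k ∘ₗ map f HC.counit
      = (f ∘ₗ (TensorProduct.rid k C).toLinearMap) ∘ₗ map id HC.counit := by
    ext; simp [mul_comm]
  rw [conv, ← HC.rid_counit_comul, ← comp_assoc, h]; rfl

/-- Hom-associativity for `g`, `f`, `g ∘ α` gives `g ∘ α² = g ∘ α³`. -/
theorem comp_α_eq_of_conv_eq_counit {f g : C →ₗ[k] k} (hf : f ∘ₗ HC.α.toLinearMap = f)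
    (hfg : HC.conv f g = HC.counit) (hgf : HC.conv g f = HC.counit) :
    g ∘ₗ HC.α.toLinearMap = g := by
  have hfg' : HC.conv f (g ∘ₗ HC.α.toLinearMap) = HC.counit := by
    rw [← hf, ← conv_comp_α, hfg, counit_comp_α]
  have h := HC.conv_assoc g f (g ∘ₗ HC.α.toLinearMap)
  rw [hfg', hgf, conv_counit, counit_conv] at h
  rwa [LinearEquiv.eq_comp_toLinearMap_iff, LinearEquiv.eq_comp_toLinearMap_iff, eq_comm] at h

def tensor : HomCoalgebra k (C ⊗[k] D) where
  comul := (tensorTensorTensorComm k C C D D).toLinearMap ∘ₗ map HC.comul HD.comul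
  counit := mul' k k ∘ₗ map HC.counit HD.counit
  α := TensorProduct.congr HC.α HD.α
  coassoc := by
    have hshuffle : (TensorProduct.assoc k (C ⊗[k] D) (C ⊗[k] D) (C ⊗[k] D)).toLinearMap ∘ₗ
          rTensor (C ⊗[k] D) (tensorTensorTensorComm k C C D D).toLinearMap ∘ₗ
          (tensorTensorTensorComm k (C ⊗[k] C) C (D ⊗[k] D) D).toLinearMap
        = lTensor (C ⊗[k] D) (tensorTensorTensorComm k C C D D).toLinearMap ∘ₗ
          (tensorTensorTensorComm k C (C ⊗[k] C) D (D ⊗[k] D)).toLinearMap ∘ₗ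
          map (TensorProduct.assoc k C C C).toLinearMap
            (TensorProduct.assoc k D D D).toLinearMap := by
      ext; rfl
    rw [toLinearMap_congr, ← rTensor_comp_map, ← lTensor_comp_map, comp_assoc, comp_assoc,
      ← comp_assoc _ _ (map _ _), ← comp_assoc _ _ (map _ _), ← tensorTensorTensorComm_comp_map,
      ← tensorTensorTensorComm_comp_map]
    simp only [comp_assoc, ← map_comp, ← HC.coassoc, ← HD.coassoc]
    simp only [map_comp, ← comp_assoc, hshuffle]
  lid_counit_comul := by
    have h : (TensorProduct.lid k (C ⊗[k] D)).toLinearMap ∘ₗ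
          map (mul' k k ∘ₗ map HC.counit HD.counit) id ∘ₗ
          (tensorTensorTensorComm k C C D D).toLinearMap
        = map ((TensorProduct.lid k C).toLinearMap ∘ₗ map HC.counit id)
            ((TensorProduct.lid k D).toLinearMap ∘ₗ map HD.counit id) := by
      ext; simp [← smul_tmul', ← mul_smul, mul_comm]
    rw [toLinearMap_congr, ← HC.lid_counit_comul, ← HD.lid_counit_comul]
    simp only [← comp_assoc] at h ⊢
    rw [map_comp, ← h]
  rid_counit_comul := by
    have h : (TensorProduct.rid k (C ⊗[k] D)).toLinearMap ∘ₗ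
          map id (mul' k k ∘ₗ map HC.counit HD.counit) ∘ₗ
          (tensorTensorTensorComm k C C D D).toLinearMap
        = map ((TensorProduct.rid k C).toLinearMap ∘ₗ map id HC.counit)
            ((TensorProduct.rid k D).toLinearMap ∘ₗ map id HD.counit) := by
      ext; simp [← smul_tmul', ← mul_smul, mul_comm]
    rw [toLinearMap_congr, ← HC.rid_counit_comul, ← HD.rid_counit_comul]
    simp only [← comp_assoc] at h ⊢
    rw [map_comp, ← h]
  comul_comp_α := by
    rw [toLinearMap_congr, comp_assoc, ← map_comp, HC.comul_comp_α, HD.comul_comp_α, map_comp,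
      ← comp_assoc, tensorTensorTensorComm_comp_map, comp_assoc]
  counit_comp_α := by
    rw [toLinearMap_congr, comp_assoc, ← map_comp, HC.counit_comp_α, HD.counit_comp_α]

theorem conv_mul'_map (f g : C →ₗ[k] k) (f' g' : D →ₗ[k] k) :
    (HC.tensor HD).conv (mul' k k ∘ₗ map f f') (mul' k k ∘ₗ map g g')
      = mul' k k ∘ₗ map (HC.conv f g) (HD.conv f' g') := by
  have h : mul' k k ∘ₗ map (mul' k k ∘ₗ map f f') (mul' k k ∘ₗ map g g') ∘ₗ
        (tensorTensorTensorComm k C C D D).toLinearMap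
      = mul' k k ∘ₗ map (mul' k k ∘ₗ map f g) (mul' k k ∘ₗ map f' g') := by
    ext; simp [mul_mul_mul_comm]
  simp only [conv, tensor, map_comp, ← comp_assoc] at h ⊢
  rw [h]

variable {HC HD} in
theorem IsComulHom.map {C' D' : Type*} [AddCommMonoid C'] [Module k C'] [AddCommMonoid D']
    [Module k D'] {HC' : HomCoalgebra k C'} {HD' : HomCoalgebra k D'} {φ : C →ₗ[k] C'}
    {ψ : D →ₗ[k] D'} (hφ : IsComulHom HC HC' φ) (hψ : IsComulHom HD HD' ψ) :
    IsComulHom (HC.tensor HD) (HC'.tensor HD') (map φ ψ) := by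
  simp only [IsComulHom, tensor]
  rw [comp_assoc, ← map_comp, hφ, hψ, map_comp, ← comp_assoc, tensorTensorTensorComm_comp_map,
    comp_assoc]

theorem isComulHom_assoc :
    IsComulHom ((HC.tensor HD).tensor HE) (HC.tensor (HD.tensor HE))
      (TensorProduct.assoc k C D E).toLinearMap := by
  have h : (tensorTensorTensorComm k C C (D ⊗[k] E) (D ⊗[k] E)).toLinearMap ∘ₗ
        lTensor (C ⊗[k] C) (tensorTensorTensorComm k D D E E).toLinearMap ∘ₗ
        (TensorProduct.assoc k (C ⊗[k] C) (D ⊗[k] D) (E ⊗[k] E)).toLinearMap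
      = map (TensorProduct.assoc k C D E).toLinearMap (TensorProduct.assoc k C D E).toLinearMap ∘ₗ
        (tensorTensorTensorComm k (C ⊗[k] D) (C ⊗[k] D) E E).toLinearMap ∘ₗ
        rTensor (E ⊗[k] E) (tensorTensorTensorComm k C C D D).toLinearMap := by
    ext; rfl
  simp only [IsComulHom, tensor]
  rw [← lTensor_comp_map, ← rTensor_comp_map, comp_assoc, comp_assoc, map_map_comp_assoc_eq]
  simp only [← comp_assoc] at h ⊢
  rw [h]

def Invariant : Type _ := {f : C →ₗ[k] k // f ∘ₗ HC.α.toLinearMap = f}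

instance : Monoid HC.Invariant where
  mul f g := ⟨HC.conv f.1 g.1, by rw [conv_comp_α, f.2, g.2]⟩
  one := ⟨HC.counit, HC.counit_comp_α⟩
  mul_assoc f g e := Subtype.ext <| by
    have h := HC.conv_assoc f.1 g.1 e.1
    rw [f.2, e.2] at h
    exact h.symm
  one_mul f := Subtype.ext <| (HC.counit_conv f.1).trans f.2
  mul_one f := Subtype.ext <| (HC.conv_counit f.1).trans f.2

def invariantUnit {f g : C →ₗ[k] k} (hf : f ∘ₗ HC.α.toLinearMap = f)
    (hg : g ∘ₗ HC.α.toLinearMap = g) (hfg : HC.conv f g = HC.counit)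
    (hgf : HC.conv g f = HC.counit) : HC.Invariantˣ :=
  ⟨⟨f, hf⟩, ⟨g, hg⟩, Subtype.ext hfg, Subtype.ext hgf⟩

namespace Invariant

variable {HC HD HE}

@[simp] theorem val_mul (f g : HC.Invariant) : (f * g).1 = HC.conv f.1 g.1 := rfl

def comap (φ : C →ₗ[k] D) (hφ : IsComulHom HC HD φ)
    (hα : φ ∘ₗ HC.α.toLinearMap = HD.α.toLinearMap ∘ₗ φ) (hε : HD.counit ∘ₗ φ = HC.counit) :
    HD.Invariant →* HC.Invariant where
  toFun f := ⟨f.1 ∘ₗ φ, by rw [comp_assoc, hα, ← comp_assoc, f.2]⟩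
  map_one' := Subtype.ext hε
  map_mul' f g := Subtype.ext (conv_comp hφ f.1 g.1).symm

variable (HC HD HE)

def counitTensor : HD.Invariant →* (HC.tensor HD).Invariant where
  toFun f := ⟨mul' k k ∘ₗ map HC.counit f.1, by
    rw [tensor, toLinearMap_congr, comp_assoc, ← map_comp, HC.counit_comp_α, f.2]⟩
  map_one' := rfl
  map_mul' f g := Subtype.ext <| by
    show mul' k k ∘ₗ map HC.counit (HD.conv f.1 g.1)
      = (HC.tensor HD).conv (mul' k k ∘ₗ map HC.counit f.1) (mul' k k ∘ₗ map HC.counit g.1)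
    rw [conv_mul'_map, counit_conv, counit_comp_α]

def tensorCounit : HC.Invariant →* (HC.tensor HD).Invariant where
  toFun f := ⟨mul' k k ∘ₗ map f.1 HD.counit, by
    rw [tensor, toLinearMap_congr, comp_assoc, ← map_comp, HD.counit_comp_α, f.2]⟩
  map_one' := rfl
  map_mul' f g := Subtype.ext <| by
    show mul' k k ∘ₗ map (HC.conv f.1 g.1) HD.counit
      = (HC.tensor HD).conv (mul' k k ∘ₗ map f.1 HD.counit) (mul' k k ∘ₗ map g.1 HD.counit)
    rw [conv_mul'_map, conv_counit, counit_comp_α]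

def comapAssoc :
    (HC.tensor (HD.tensor HE)).Invariant →* ((HC.tensor HD).tensor HE).Invariant :=
  comap (TensorProduct.assoc k C D E).toLinearMap (isComulHom_assoc HC HD HE)
    (by simp only [tensor, toLinearMap_congr]; exact (map_map_comp_assoc_eq _ _ _).symm)
    (by ext; simp [tensor, mul_assoc])

end Invariant

end HomCoalgebra

namespace HomHopf

variable {k : Type u} {H : Type v} [Field k] [AddCommGroup H] [Module k H] (HH : HomHopf k H)

def toHomCoalgebra : HomCoalgebra k H where
  comul := HH.comul
  counit := HH.counit
  α := HH.α
  coassoc := by ext x; simpa [HH.repr, map_sum] using HH.hom_coassoc x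
  lid_counit_comul := by ext x; simpa [HH.repr] using HH.counit_left x
  rid_counit_comul := by ext x; simpa [HH.repr] using HH.counit_right x
  comul_comp_α := by ext x; simpa [HH.repr] using HH.comul_α x
  counit_comp_α := by ext x; exact HH.counit_α x

abbrev tensorSquare : HomCoalgebra k (H ⊗[k] H) := HH.toHomCoalgebra.tensor HH.toHomCoalgebra

abbrev tensorCube : HomCoalgebra k (H ⊗[k] H ⊗[k] H) := HH.tensorSquare.tensor HH.toHomCoalgebra

theorem tensorSquare_conv_tmul (F G : H ⊗[k] H →ₗ[k] k) (x y : H) :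
    HH.tensorSquare.conv F G (x ⊗ₜ y) = ∑ i ∈ HH.T x, ∑ j ∈ HH.T y,
      F (HH.d1 x i ⊗ₜ HH.d1 y j) * G (HH.d2 x i ⊗ₜ HH.d2 y j) := by
  simp only [HomCoalgebra.conv, HomCoalgebra.tensor, toHomCoalgebra, coe_comp,
    LinearEquiv.coe_coe, Function.comp_apply, map_tmul, HH.repr, tmul_sum, sum_tmul, map_sum,
    tensorTensorTensorComm_tmul, mul'_apply]
  exact Finset.sum_comm

theorem tensorCube_conv_tmul (F G : H ⊗[k] H ⊗[k] H →ₗ[k] k) (x y z : H) :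
    HH.tensorCube.conv F G (x ⊗ₜ y ⊗ₜ z) = ∑ i ∈ HH.T x, ∑ j ∈ HH.T y, ∑ n ∈ HH.T z,
      F (HH.d1 x i ⊗ₜ HH.d1 y j ⊗ₜ HH.d1 z n) * G (HH.d2 x i ⊗ₜ HH.d2 y j ⊗ₜ HH.d2 z n) := by
  simp only [HomCoalgebra.conv, HomCoalgebra.tensor, toHomCoalgebra, coe_comp,
    LinearEquiv.coe_coe, Function.comp_apply, map_tmul, HH.repr, tmul_sum, sum_tmul, map_sum,
    tensorTensorTensorComm_tmul, mul'_apply]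
  rw [Finset.sum_comm, Finset.sum_congr rfl fun _ _ => Finset.sum_comm, Finset.sum_comm]

theorem isComulHom_lift_mul :
    HomCoalgebra.IsComulHom HH.tensorSquare HH.toHomCoalgebra (lift HH.mul) := by
  ext x y
  simp only [HomCoalgebra.tensor, toHomCoalgebra, AlgebraTensorModule.curry_apply,
    restrictScalars_self, curry_apply, coe_comp, Function.comp_apply, lift.tmul, HH.comul_mul,
    LinearEquiv.coe_coe, map_tmul, HH.repr, tmul_sum, sum_tmul, map_sum,
    tensorTensorTensorComm_tmul]
  exact Finset.sum_comm

theorem alphaInvariant2_iff (τ : H →ₗ[k] H →ₗ[k] k) :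
    AlphaInvariant2 HH (fun h g => τ h g) ↔ lift τ ∘ₗ HH.tensorSquare.α.toLinearMap = lift τ := by
  refine ⟨fun hτ => ext' fun h g => hτ h g, fun hτ h g => ?_⟩
  simpa [HomCoalgebra.tensor, toHomCoalgebra] using LinearMap.congr_fun hτ (h ⊗ₜ g)

theorem tensorSquare_conv_lift_eq_counit {τ τ' : H →ₗ[k] H →ₗ[k] k}
    (hτ : ∀ h g, ∑ i ∈ HH.T h, ∑ j ∈ HH.T g,
      τ (HH.d1 h i) (HH.d1 g j) * τ' (HH.d2 h i) (HH.d2 g j) = HH.counit h * HH.counit g) :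
    HH.tensorSquare.conv (lift τ) (lift τ') = HH.tensorSquare.counit :=
  ext' fun h g => by
    rw [tensorSquare_conv_tmul]
    simpa [HomCoalgebra.tensor, toHomCoalgebra] using hτ h g

theorem sum_counit_mul (φ : H →ₗ[k] k) (h : H) :
    ∑ i ∈ HH.T h, HH.counit (HH.d1 h i) * φ (HH.d2 h i) = φ (HH.α h) := by
  rw [← HH.counit_left h, map_sum]; simp

theorem sum_mul_counit (φ : H →ₗ[k] k) (h : H) :
    ∑ i ∈ HH.T h, φ (HH.d1 h i) * HH.counit (HH.d2 h i) = φ (HH.α h) := by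
  rw [← HH.counit_right h, map_sum]; simp [mul_comm]

open HomCoalgebra

def counitTensor : HH.tensorSquare.Invariant →* HH.tensorCube.Invariant :=
  (Invariant.comapAssoc _ _ _).comp (Invariant.counitTensor _ _)

def tensorCounit : HH.tensorSquare.Invariant →* HH.tensorCube.Invariant :=
  Invariant.tensorCounit _ _

def compAlphaMul : HH.tensorSquare.Invariant →* HH.tensorCube.Invariant :=
  (Invariant.comapAssoc _ _ _).comp <|
    Invariant.comap (map HH.α.toLinearMap (lift HH.mul))
      (IsComulHom.map HH.toHomCoalgebra.comul_comp_α HH.isComulHom_lift_mul)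
      (by ext; simp [toHomCoalgebra, HomCoalgebra.tensor, HH.α_mul])
      (by ext; simp [toHomCoalgebra, HomCoalgebra.tensor, HH.counit_α, HH.counit_mul])

def compMulAlpha : HH.tensorSquare.Invariant →* HH.tensorCube.Invariant :=
  Invariant.comap (map (lift HH.mul) HH.α.toLinearMap)
    (IsComulHom.map HH.isComulHom_lift_mul HH.toHomCoalgebra.comul_comp_α)
    (by ext; simp [toHomCoalgebra, HomCoalgebra.tensor, HH.α_mul])
    (by ext; simp [toHomCoalgebra, HomCoalgebra.tensor, HH.counit_α, HH.counit_mul])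

variable (t : HH.tensorSquare.Invariant) (h l m : H)

@[simp] theorem counitTensor_apply :
    (HH.counitTensor t).1 (h ⊗ₜ l ⊗ₜ m) = HH.counit h * t.1 (l ⊗ₜ m) := rfl

@[simp] theorem tensorCounit_apply :
    (HH.tensorCounit t).1 (h ⊗ₜ l ⊗ₜ m) = t.1 (h ⊗ₜ l) * HH.counit m := rfl

@[simp] theorem compAlphaMul_apply :
    (HH.compAlphaMul t).1 (h ⊗ₜ l ⊗ₜ m) = t.1 (HH.α h ⊗ₜ HH.mul l m) := rfl

@[simp] theorem compMulAlpha_apply :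
    (HH.compMulAlpha t).1 (h ⊗ₜ l ⊗ₜ m) = t.1 (HH.mul h l ⊗ₜ HH.α m) := rfl

theorem counitTensor_mul_compAlphaMul_apply :
    (HH.counitTensor t * HH.compAlphaMul t).1 (h ⊗ₜ l ⊗ₜ m) = ∑ j ∈ HH.T l, ∑ n ∈ HH.T m,
      t.1 (HH.d1 l j ⊗ₜ HH.d1 m n) * t.1 (HH.α (HH.α h) ⊗ₜ HH.mul (HH.d2 l j) (HH.d2 m n)) := by
  rw [Invariant.val_mul, tensorCube_conv_tmul, Finset.sum_comm,
    Finset.sum_congr rfl fun _ _ => Finset.sum_comm]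
  refine Finset.sum_congr rfl fun j _ => Finset.sum_congr rfl fun n _ => ?_
  have h := HH.sum_counit_mul (t.1 ∘ₗ (TensorProduct.mk k H H).flip
    (HH.mul (HH.d2 l j) (HH.d2 m n)) ∘ₗ HH.α.toLinearMap) h
  simp only [coe_comp, Function.comp_apply, flip_apply, mk_apply, LinearEquiv.coe_coe] at h
  simp only [counitTensor_apply, compAlphaMul_apply, ← h, Finset.mul_sum]
  exact Finset.sum_congr rfl fun _ _ => by ring

theorem compAlphaMul_mul_counitTensor_apply :
    (HH.compAlphaMul t * HH.counitTensor t).1 (h ⊗ₜ l ⊗ₜ m) = ∑ j ∈ HH.T l, ∑ n ∈ HH.T m,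
      t.1 (HH.α (HH.α h) ⊗ₜ HH.mul (HH.d1 l j) (HH.d1 m n)) * t.1 (HH.d2 l j ⊗ₜ HH.d2 m n) := by
  rw [Invariant.val_mul, tensorCube_conv_tmul, Finset.sum_comm,
    Finset.sum_congr rfl fun _ _ => Finset.sum_comm]
  refine Finset.sum_congr rfl fun j _ => Finset.sum_congr rfl fun n _ => ?_
  have h := HH.sum_mul_counit (t.1 ∘ₗ (TensorProduct.mk k H H).flip
    (HH.mul (HH.d1 l j) (HH.d1 m n)) ∘ₗ HH.α.toLinearMap) h
  simp only [coe_comp, Function.comp_apply, flip_apply, mk_apply, LinearEquiv.coe_coe] at h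
  simp only [counitTensor_apply, compAlphaMul_apply, ← h, Finset.sum_mul]
  exact Finset.sum_congr rfl fun _ _ => by ring

theorem tensorCounit_mul_compMulAlpha_apply :
    (HH.tensorCounit t * HH.compMulAlpha t).1 (h ⊗ₜ l ⊗ₜ m) = ∑ i ∈ HH.T h, ∑ j ∈ HH.T l,
      t.1 (HH.d1 h i ⊗ₜ HH.d1 l j) * t.1 (HH.mul (HH.d2 h i) (HH.d2 l j) ⊗ₜ HH.α (HH.α m)) := by
  rw [Invariant.val_mul, tensorCube_conv_tmul]
  refine Finset.sum_congr rfl fun i _ => Finset.sum_congr rfl fun j _ => ?_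
  have h := HH.sum_counit_mul (t.1 ∘ₗ TensorProduct.mk k H H
    (HH.mul (HH.d2 h i) (HH.d2 l j)) ∘ₗ HH.α.toLinearMap) m
  simp only [coe_comp, Function.comp_apply, mk_apply, LinearEquiv.coe_coe] at h
  simp only [tensorCounit_apply, compMulAlpha_apply, ← h, Finset.mul_sum]
  exact Finset.sum_congr rfl fun _ _ => by ring

theorem compMulAlpha_mul_tensorCounit_apply :
    (HH.compMulAlpha t * HH.tensorCounit t).1 (h ⊗ₜ l ⊗ₜ m) = ∑ i ∈ HH.T h, ∑ j ∈ HH.T l,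
      t.1 (HH.mul (HH.d1 h i) (HH.d1 l j) ⊗ₜ HH.α (HH.α m)) * t.1 (HH.d2 h i ⊗ₜ HH.d2 l j) := by
  rw [Invariant.val_mul, tensorCube_conv_tmul]
  refine Finset.sum_congr rfl fun i _ => Finset.sum_congr rfl fun j _ => ?_
  have h := HH.sum_mul_counit (t.1 ∘ₗ TensorProduct.mk k H H
    (HH.mul (HH.d1 h i) (HH.d1 l j)) ∘ₗ HH.α.toLinearMap) m
  simp only [coe_comp, Function.comp_apply, mk_apply, LinearEquiv.coe_coe] at h
  simp only [tensorCounit_apply, compMulAlpha_apply, ← h, Finset.sum_mul]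
  exact Finset.sum_congr rfl fun _ _ => by ring

theorem leftCocycleEq_iff :
    LeftCocycleEq HH (fun h g => t.1 (h ⊗ₜ g))
      ↔ HH.counitTensor t * HH.compAlphaMul t = HH.tensorCounit t * HH.compMulAlpha t := by
  refine ⟨fun hL => Subtype.ext <| ext_threefold fun h l m => ?_, fun hL h l m => ?_⟩
  · rw [counitTensor_mul_compAlphaMul_apply, tensorCounit_mul_compMulAlpha_apply, hL]
  · rw [← counitTensor_mul_compAlphaMul_apply, ← tensorCounit_mul_compMulAlpha_apply, hL]

theorem rightCocycleEq_iff :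
    RightCocycleEq HH (fun h g => t.1 (h ⊗ₜ g))
      ↔ HH.compAlphaMul t * HH.counitTensor t = HH.compMulAlpha t * HH.tensorCounit t := by
  refine ⟨fun hR => Subtype.ext <| ext_threefold fun h l m => ?_, fun hR h l m => ?_⟩
  · rw [compAlphaMul_mul_counitTensor_apply, compMulAlpha_mul_tensorCounit_apply, hR]
  · rw [← compAlphaMul_mul_counitTensor_apply, ← compMulAlpha_mul_tensorCounit_apply, hR]

end HomHopf

theorem leftCocycle_iff_inverse_rightCocycle_general
    {k : Type u} {H : Type v} [Field k] [AddCommGroup H] [Module k H]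
    (HH : HomHopf k H) (σ σ' : H →ₗ[k] H →ₗ[k] k)
    (hα : AlphaInvariant2 HH (fun h g => σ h g))
    (hinv : ConvInv2 HH (fun h g => σ h g) (fun h g => σ' h g)) :
    IsLeftCocycle HH (fun h g => σ h g) ↔ IsRightCocycle HH (fun h g => σ' h g) := by
  have hσ := (HH.alphaInvariant2_iff σ).1 hα
  have hσσ' := HH.tensorSquare_conv_lift_eq_counit hinv.1
  have hσ'σ := HH.tensorSquare_conv_lift_eq_counit hinv.2
  have hσ' := HH.tensorSquare.comp_α_eq_of_conv_eq_counit hσ hσσ' hσ'σ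
  let s := HH.tensorSquare.invariantUnit hσ hσ' hσσ' hσ'σ
  rw [IsLeftCocycle, IsRightCocycle, and_iff_right hα,
    and_iff_right ((HH.alphaInvariant2_iff σ').2 hσ')]
  exact (HH.leftCocycleEq_iff s).trans <|
    (Units.map_mul_map_eq_iff _ _ _ _ s).trans (HH.rightCocycleEq_iff ↑s⁻¹).symm

/-- If `σ : H ⊗ H → k` is normalized, convolution invertible (with
inverse `σ'`) and `σ∘(α⊗α) = σ`, then `σ` is a left Hom-2-cocycle if and only if `σ'`
is a right Hom-2-cocycle. -/
theorem leftCocycle_iff_inverse_rightCocycle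
    {k : Type u} {H : Type v} [Field k] [AddCommGroup H] [Module k H]
    (HH : HomHopf k H) (σ σ' : H →ₗ[k] H →ₗ[k] k)
    (hn : Normalized2 HH (fun h g => σ h g))
    (hα : AlphaInvariant2 HH (fun h g => σ h g))
    (hinv : ConvInv2 HH (fun h g => σ h g) (fun h g => σ' h g)) :
    IsLeftCocycle HH (fun h g => σ h g) ↔ IsRightCocycle HH (fun h g => σ' h g) :=
  leftCocycle_iff_inverse_rightCocycle_general HH σ σ' hα hinv
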